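/- Under the same hypotheses (κ₂ with decay exponent s > 2, κ₃ dominated by products of κ₂ over spanning trees), there exists C such that for all N: ∑_{a1,...,a6=1}^N |κ₃((a1,a2),(a3,a4),(a5,a6))| ≤ C·N². -/

import Mathlib

open Finset MeasureTheory

/-- The metric on index pairs: d((a1,a2),(a3,a4)) = min(|a1-a3|+|a2-a4|, |a1-a4|+|a2-a3|). -/
noncomputable def dIdx {N : ℕ} (a b : Fin N × Fin N) : ℝ :=
  min (|((a.1:ℕ):ℝ) - ((b.1:ℕ):ℝ)| + |((a.2:ℕ):ℝ) - ((b.2:ℕ):ℝ)|)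
      (|((a.1:ℕ):ℝ) - ((b.2:ℕ):ℝ)| + |((a.2:ℕ):ℝ) - ((b.1:ℕ):ℝ)|)

/-- Euclidean norm of a vector in ℝ^N. -/
noncomputable def eucNorm {N : ℕ} (x : Fin N → ℝ) : ℝ := Real.sqrt (∑ i, x i ^ 2)

/-!
Write `F α β = Cκ / (1 + d(α, β) ^ s)`. Since `|κ₂| ≤ F` and `F` is symmetric, each of the three
tree terms bounding `κ₃` sums to a star `∑ c, (∑ a, F c a) * (∑ b, F c b)`, which is at most
`N² K²` once the row sums of `F` are bounded by `K` uniformly in `N`. For that, split the minimum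
in `d` and use `(1 + x^(s/2)) (1 + y^(s/2)) ≤ 2 (1 + (x + y)^s)`: a row sum is then at most a sum
of products of two one-dimensional sums `∑ b, 1 / (1 + |a - b|^(s/2))`, each bounded by a series
over `ℤ` that converges because `s / 2 > 1`.
-/

section TreeSums

variable {ι : Type*} [Fintype ι]

lemma sum_sum_sum_mul_le_card_mul_sq {F : ι → ι → ℝ} {K : ℝ} (hF : ∀ a b, 0 ≤ F a b)
    (hrow : ∀ a, ∑ b, F a b ≤ K) :
    ∑ c, ∑ a, ∑ b, F c a * F c b ≤ Fintype.card ι * K ^ 2 :=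
  calc ∑ c, ∑ a, ∑ b, F c a * F c b = ∑ c, (∑ a, F c a) ^ 2 := by
        simp only [sq, Fintype.sum_mul_sum]
    _ ≤ ∑ _c : ι, K ^ 2 := sum_le_sum fun c _ =>
        pow_le_pow_left₀ (sum_nonneg fun a _ => hF c a) (hrow c) 2
    _ = Fintype.card ι * K ^ 2 := by simp

lemma sum_abs_le_of_abs_le_tree_products {κ₂ F : ι → ι → ℝ} {κ₃ : ι → ι → ι → ℝ} {C₃ K : ℝ}
    (hC₃ : 0 ≤ C₃) (hsymm : ∀ a b, F a b = F b a) (hrow : ∀ a, ∑ b, F a b ≤ K)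
    (h₂ : ∀ a b, |κ₂ a b| ≤ F a b)
    (h₃ : ∀ a b c, |κ₃ a b c| ≤
      C₃ * (|κ₂ a b * κ₂ b c| + |κ₂ a b * κ₂ a c| + |κ₂ a c * κ₂ b c|)) :
    ∑ a, ∑ b, ∑ c, |κ₃ a b c| ≤ 3 * C₃ * K ^ 2 * Fintype.card ι := by
  have hF : ∀ a b, 0 ≤ F a b := fun a b => (abs_nonneg _).trans (h₂ a b)
  have hstar := sum_sum_sum_mul_le_card_mul_sq hF hrow
  have hpath : ∑ a, ∑ b, ∑ c, F a b * F b c ≤ Fintype.card ι * K ^ 2 := by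
    rw [sum_comm]
    simpa only [hsymm _ (_ : ι)] using hstar
  have hfork : ∑ a, ∑ b, ∑ c, F a c * F b c ≤ Fintype.card ι * K ^ 2 := by
    simp only [sum_comm (γ := ι) (f := fun b c => F _ c * F b c)]
    rw [sum_comm]
    simpa only [hsymm _ (_ : ι)] using hstar
  have hpointwise : ∀ a b c,
      |κ₃ a b c| ≤ C₃ * (F a b * F b c + F a b * F a c + F a c * F b c) := fun a b c => by
    refine (h₃ a b c).trans (mul_le_mul_of_nonneg_left ?_ hC₃)
    simp only [abs_mul]
    gcongr <;> first | exact h₂ _ _ | exact hF _ _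
  calc ∑ a, ∑ b, ∑ c, |κ₃ a b c|
      ≤ ∑ a, ∑ b, ∑ c, C₃ * (F a b * F b c + F a b * F a c + F a c * F b c) := by
        gcongr with a _ b _ c _; exact hpointwise a b c
    _ = C₃ * (∑ a, ∑ b, ∑ c, F a b * F b c + ∑ a, ∑ b, ∑ c, F a b * F a c +
          ∑ a, ∑ b, ∑ c, F a c * F b c) := by
        simp only [← mul_sum, sum_add_distrib]
    _ ≤ C₃ * (Fintype.card ι * K ^ 2 + Fintype.card ι * K ^ 2 + Fintype.card ι * K ^ 2) := by
        gcongr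
    _ = 3 * C₃ * K ^ 2 * Fintype.card ι := by ring

end TreeSums

lemma one_div_one_add_min_rpow_le {x y s : ℝ} (hx : 0 ≤ x) (hy : 0 ≤ y) :
    1 / (1 + min x y ^ s) ≤ 1 / (1 + x ^ s) + 1 / (1 + y ^ s) := by
  have := Real.rpow_nonneg hx s
  have := Real.rpow_nonneg hy s
  rcases min_choice x y with h | h <;> rw [h]
  · exact le_add_of_nonneg_right (by positivity)
  · exact le_add_of_nonneg_left (by positivity)

lemma one_div_one_add_add_rpow_le {x y s : ℝ} (hx : 0 ≤ x) (hy : 0 ≤ y) (hs : 0 ≤ s) :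
    1 / (1 + (x + y) ^ s) ≤ 2 * (1 / (1 + x ^ (s / 2)) * (1 / (1 + y ^ (s / 2)))) := by
  set t := (x + y) ^ (s / 2)
  have ht : 0 ≤ t := Real.rpow_nonneg (add_nonneg hx hy) _
  have hxt : x ^ (s / 2) ≤ t := Real.rpow_le_rpow hx (by linarith) (by positivity)
  have hyt : y ^ (s / 2) ≤ t := Real.rpow_le_rpow hy (by linarith) (by positivity)
  have hsq : (x + y) ^ s = t ^ 2 := by
    rw [← Real.rpow_natCast, ← Real.rpow_mul (add_nonneg hx hy)]
    norm_num
  have := Real.rpow_nonneg hx (s / 2)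
  have := Real.rpow_nonneg hy (s / 2)
  rw [hsq, div_mul_div_comm, one_mul, mul_one_div, div_le_div_iff₀ (by positivity) (by positivity)]
  calc 1 * ((1 + x ^ (s / 2)) * (1 + y ^ (s / 2))) ≤ (1 + t) * (1 + t) := by
        rw [one_mul]; gcongr
    _ ≤ 2 * (1 + t ^ 2) := by nlinarith [sq_nonneg (t - 1)]

lemma summable_one_div_one_add_abs_int_rpow {p : ℝ} (hp : 1 < p) :
    Summable fun z : ℤ => 1 / (1 + |(z : ℝ)| ^ p) := by
  refine (Real.summable_abs_int_rpow hp).of_norm_bounded_eventually ?_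
  filter_upwards [Filter.eventually_cofinite_ne 0] with z hz
  have hpos : 0 < |(z : ℝ)| ^ p := Real.rpow_pos_of_pos (by positivity) p
  rw [Real.norm_of_nonneg (by positivity), Real.rpow_neg (abs_nonneg _), ← one_div]
  exact one_div_le_one_div_of_le hpos (by linarith)

lemma sum_one_div_one_add_abs_sub_rpow_le_tsum {p : ℝ} (hp : 1 < p) (N a : ℕ) :
    ∑ b : Fin N, 1 / (1 + |(a : ℝ) - (b : ℕ)| ^ p) ≤ ∑' z : ℤ, 1 / (1 + |(z : ℝ)| ^ p) := by
  have hinj : Function.Injective fun b : Fin N => (a : ℤ) - (b : ℕ) := fun b c h => by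
    simp only [sub_right_inj, Nat.cast_inj] at h
    exact Fin.ext h
  have key := tsum_comp_le_tsum_of_inj (summable_one_div_one_add_abs_int_rpow hp)
    (fun z => by positivity) hinj
  simpa [tsum_fintype, Function.comp_def] using key

lemma sum_one_div_one_add_dIdx_rpow_le {s : ℝ} (hs : 2 < s) {N : ℕ} (α : Fin N × Fin N) :
    ∑ β, 1 / (1 + dIdx α β ^ s) ≤ 4 * (∑' z : ℤ, 1 / (1 + |(z : ℝ)| ^ (s / 2))) ^ 2 := by
  set S := ∑' z : ℤ, 1 / (1 + |(z : ℝ)| ^ (s / 2))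
  set e : ℕ → Fin N → ℝ := fun a b => 1 / (1 + |(a : ℝ) - (b : ℕ)| ^ (s / 2))
  have he : ∀ a b, 0 ≤ e a b := fun a b => by positivity
  have hsum : ∀ a, ∑ b, e a b ≤ S := sum_one_div_one_add_abs_sub_rpow_le_tsum (by linarith) N
  have hprod : ∀ a a', ∑ b, ∑ b', e a b * e a' b' ≤ S ^ 2 := fun a a' => by
    rw [← Fintype.sum_mul_sum, sq]
    exact mul_le_mul (hsum a) (hsum a') (sum_nonneg fun b _ => he a' b)
      ((sum_nonneg fun b _ => he a b).trans (hsum a))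
  have hpointwise : ∀ β : Fin N × Fin N, 1 / (1 + dIdx α β ^ s) ≤
      2 * (e α.1 β.1 * e α.2 β.2) + 2 * (e α.2 β.1 * e α.1 β.2) := fun β => by
    refine (one_div_one_add_min_rpow_le (by positivity) (by positivity)).trans ?_
    rw [mul_comm (e α.2 β.1)]
    gcongr <;> exact one_div_one_add_add_rpow_le (abs_nonneg _) (abs_nonneg _) (by linarith)
  calc ∑ β, 1 / (1 + dIdx α β ^ s)
      ≤ ∑ β : Fin N × Fin N, (2 * (e α.1 β.1 * e α.2 β.2) + 2 * (e α.2 β.1 * e α.1 β.2)) :=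
        sum_le_sum fun β _ => hpointwise β
    _ = 2 * ∑ b, ∑ b', e α.1 b * e α.2 b' + 2 * ∑ b, ∑ b', e α.2 b * e α.1 b' := by
        simp only [sum_add_distrib, ← mul_sum, Fintype.sum_prod_type]
    _ ≤ 2 * S ^ 2 + 2 * S ^ 2 := by gcongr <;> exact hprod _ _
    _ = 4 * S ^ 2 := by ring

lemma dIdx_comm {N : ℕ} (a b : Fin N × Fin N) : dIdx a b = dIdx b a := by
  simp only [dIdx, abs_sub_comm ((a.1 : ℕ) : ℝ), abs_sub_comm ((a.2 : ℕ) : ℝ),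
    add_comm |((b.2 : ℕ) : ℝ) - _|]

theorem three_cumulant_six_sums (s Cκ C₃ : ℝ) (hs : 2 < s) (hCκ : 0 < Cκ) (hC₃ : 0 < C₃) :
    ∃ C : ℝ, 0 < C ∧ ∀ (N : ℕ)
      (κ₂ : Fin N × Fin N → Fin N × Fin N → ℝ)
      (κ₃ : Fin N × Fin N → Fin N × Fin N → Fin N × Fin N → ℝ),
      (∀ α β, |κ₂ α β| ≤ Cκ / (1 + dIdx α β ^ s)) →
      (∀ α β γ, |κ₃ α β γ| ≤ C₃ * (|κ₂ α β * κ₂ β γ| + |κ₂ α β * κ₂ α γ| +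
          |κ₂ α γ * κ₂ β γ|)) →
      ∑ a1 : Fin N, ∑ a2 : Fin N, ∑ a3 : Fin N, ∑ a4 : Fin N, ∑ a5 : Fin N, ∑ a6 : Fin N,
        |κ₃ (a1, a2) (a3, a4) (a5, a6)| ≤ C * (N : ℝ) ^ 2 := by
  set S := ∑' z : ℤ, 1 / (1 + |(z : ℝ)| ^ (s / 2))
  have hS : 1 ≤ S := by
    have h0 := (summable_one_div_one_add_abs_int_rpow (by linarith : 1 < s / 2)).le_tsum 0
      fun z _ => by positivity
    rwa [Int.cast_zero, abs_zero, Real.zero_rpow (by positivity), add_zero, div_one] at h0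
  set K := Cκ * (4 * S ^ 2)
  have hK : 0 < K := mul_pos hCκ (mul_pos four_pos (pow_pos (by linarith) 2))
  refine ⟨3 * C₃ * K ^ 2, by positivity, fun N κ₂ κ₃ h₂ h₃ => ?_⟩
  have hrow : ∀ α : Fin N × Fin N, ∑ β, Cκ / (1 + dIdx α β ^ s) ≤ K := fun α => by
    simp only [div_eq_mul_one_div Cκ, ← mul_sum]
    exact mul_le_mul_of_nonneg_left (sum_one_div_one_add_dIdx_rpow_le hs α) hCκ.le
  have hsymm : ∀ α β : Fin N × Fin N, Cκ / (1 + dIdx α β ^ s) =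
      Cκ / (1 + dIdx β α ^ s) := fun α β => by
    rw [dIdx_comm]
  calc ∑ a1 : Fin N, ∑ a2 : Fin N, ∑ a3 : Fin N, ∑ a4 : Fin N, ∑ a5 : Fin N, ∑ a6 : Fin N,
        |κ₃ (a1, a2) (a3, a4) (a5, a6)| = ∑ α, ∑ β, ∑ γ, |κ₃ α β γ| := by
        simp only [Fintype.sum_prod_type]
    _ ≤ 3 * C₃ * K ^ 2 * Fintype.card (Fin N × Fin N) :=
        sum_abs_le_of_abs_le_tree_products hC₃.le hsymm hrow h₂ h₃
    _ = 3 * C₃ * K ^ 2 * (N : ℝ) ^ 2 := by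
        rw [Fintype.card_prod, Fintype.card_fin]; push_cast; ring
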